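/- arXiv:1601.06158 — 4 statements merged into one kernel-verified Lean document; each statement's English description precedes it below -/
import Mathlib

section
/- For n ≥ k ≥ 0, the number of paths from (0,0) to (n,k) in the Catalan–Schröder lattice L_CS equals the coefficient of x^k in F(x)·C(x)^{n-k}, where F(x) is the generating function for paths to diagonal points (n,n) in L_CS and C(x) is the Catalan generating function. Concretely: (number of paths to (n,k)) = Σ_{m=0}^{k} f_m · [x^{k-m}] C(x)^{n-k}. -/
/-!
Write `P(n, k)` for the number of `L_CS` paths to `(n, k)`. When `k < n` the last step of such a
path is not diagonal, since a diagonal step taken from a point with `a ≤ b` ends in that region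
again; hence `P(n + 1, k + 1) = P(n, k + 1) + P(n + 1, k)` for `k < n`, with `P(n, 0) = 1` and
`P(n, n) = f_n`. Indexing by `n = k + r`, the coefficients `[x^k] F(x) C(x)^r` satisfy the same
recurrence because `C = 1 + x C²`, and the same boundary values because `F(0) = C(0) = 1`.
The sum in the theorem is the coefficient `[x^k] F(x) C(x)^(n-k)` written out.
-/

open Finset PowerSeries

/-- Large Schröder numbers. -/
def schroeder : ℕ → ℕ
  | 0 => 1
  | n + 1 => schroeder n + ∑ i : Fin (n + 1), schroeder i * schroeder (n - i)

/-- The points visited by a path (a list of steps) starting at (0,0). -/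
def pts (l : List (ℤ × ℤ)) : List (ℤ × ℤ) :=
  l.scanl (fun p s => (p.1 + s.1, p.2 + s.2)) (0, 0)

/-- The endpoint of a path starting at (0,0). -/
def endPt (l : List (ℤ × ℤ)) : ℤ × ℤ :=
  ((l.map Prod.fst).sum, (l.map Prod.snd).sum)

/-- All steps are unit steps (1,0) or (0,1). -/
def unitSteps (l : List (ℤ × ℤ)) : Prop := ∀ s ∈ l, s = (1, 0) ∨ s = (0, 1)

/-- All steps are (1,0), (0,1) or (1,1). -/
def schSteps (l : List (ℤ × ℤ)) : Prop := ∀ s ∈ l, s = (1, 0) ∨ s = (0, 1) ∨ s = (1, 1)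

/-- The path stays weakly below the diagonal y = x. -/
def weaklyBelow (l : List (ℤ × ℤ)) : Prop := ∀ p ∈ pts l, p.2 ≤ p.1

/-- The path stays strictly below the diagonal except at its start (0,0). -/
def strictBelowAfterStart (l : List (ℤ × ℤ)) : Prop :=
  ∀ p ∈ pts l, p ≠ (0, 0) → p.2 < p.1

/-- Validity of a path starting at point `p` in a lattice where steps (1,0) and (0,1)
are allowed everywhere and the diagonal step (1,1) is allowed exactly from points
satisfying `D`. -/
def okFrom (D : ℤ × ℤ → Prop) : ℤ × ℤ → List (ℤ × ℤ) → Prop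
  | _, [] => True
  | p, s :: l => (s = (1, 0) ∨ s = (0, 1) ∨ (s = (1, 1) ∧ D p)) ∧
      okFrom D (p.1 + s.1, p.2 + s.2) l

/-- Paths from (0,0) to (n,k) in the Catalan–Schröder lattice L_CS:
diagonal steps allowed from points (a,b) with b ≥ a. -/
def LCS (n k : ℕ) : Set (List (ℤ × ℤ)) :=
  {l | okFrom (fun p => p.1 ≤ p.2) (0, 0) l ∧ endPt l = ((n : ℤ), (k : ℤ))}

/-- Paths from (0,0) to (n,k) in the lattice L*_CS:
diagonal steps allowed only from points (a,b) with b > a. -/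
def LCSstar (n k : ℕ) : Set (List (ℤ × ℤ)) :=
  {l | okFrom (fun p => p.1 < p.2) (0, 0) l ∧ endPt l = ((n : ℤ), (k : ℤ))}

/-- Weakly subdiagonal unit-step paths from (0,0) to (n,k). -/
def CPath (n k : ℕ) : Set (List (ℤ × ℤ)) :=
  {l | unitSteps l ∧ endPt l = ((n : ℤ), (k : ℤ)) ∧ weaklyBelow l}

/-- Weakly subdiagonal paths from (0,0) to (n,k) with steps (1,0),(0,1),(1,1). -/
def SPath (n k : ℕ) : Set (List (ℤ × ℤ)) :=
  {l | schSteps l ∧ endPt l = ((n : ℤ), (k : ℤ)) ∧ weaklyBelow l}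

/-- Number of paths from (0,0) to (n,n) in L_CS. -/
noncomputable def fCS (n : ℕ) : ℕ := Nat.card ↥(LCS n n)

/-- Number of paths from (0,0) to (n,n) in L*_CS. -/
noncomputable def fCSstar (n : ℕ) : ℕ := Nat.card ↥(LCSstar n n)

/-- Generating function of the Catalan numbers. -/
noncomputable def catalanGF : PowerSeries ℤ := PowerSeries.mk fun n => (catalan n : ℤ)

/-- Generating function of the large Schröder numbers. -/
noncomputable def schroederGF : PowerSeries ℤ := PowerSeries.mk fun n => (schroeder n : ℤ)

/-- Generating function F(x) of diagonal path counts in L_CS. -/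
noncomputable def FGF : PowerSeries ℤ := PowerSeries.mk fun n => (fCS n : ℤ)

/-- Generating function F*(x) of diagonal path counts in L*_CS. -/
noncomputable def FstarGF : PowerSeries ℤ := PowerSeries.mk fun n => (fCSstar n : ℤ)

/-- Substitution x ↦ x² in a formal power series: g(x²). -/
noncomputable def subSq (g : PowerSeries ℤ) : PowerSeries ℤ :=
  PowerSeries.mk fun n => if 2 ∣ n then PowerSeries.coeff (n / 2) g else 0

/-- Substitution x ↦ x³ in a formal power series: g(x³). -/
noncomputable def subCube (g : PowerSeries ℤ) : PowerSeries ℤ :=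
  PowerSeries.mk fun n => if 3 ∣ n then PowerSeries.coeff (n / 3) g else 0


theorem List.finite_setOf_forall_mem_length_le {α : Type*} {s : Set α} (hs : s.Finite) (N : ℕ) :
    {l : List α | (∀ x ∈ l, x ∈ s) ∧ l.length ≤ N}.Finite := by
  have := hs.to_subtype
  refine ((List.finite_length_le s N).image (List.map (↑))).subset ?_
  rintro l ⟨hmem, hlen⟩
  lift l to List s using hmem
  exact ⟨l, by simpa using hlen, rfl⟩

lemma endPt_cons (s : ℤ × ℤ) (l : List (ℤ × ℤ)) :
    endPt (s :: l) = (s.1 + (endPt l).1, s.2 + (endPt l).2) := by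
  simp [endPt]

lemma endPt_concat (l : List (ℤ × ℤ)) (s : ℤ × ℤ) :
    endPt (l ++ [s]) = ((endPt l).1 + s.1, (endPt l).2 + s.2) := by
  simp [endPt]

lemma endPt_replicate (m : ℕ) : endPt (List.replicate m ((1 : ℤ), (0 : ℤ))) = ((m : ℤ), 0) := by
  simp [endPt, List.sum_replicate]

lemma schSteps_of_okFrom {D : ℤ × ℤ → Prop} {p : ℤ × ℤ} {l : List (ℤ × ℤ)}
    (h : okFrom D p l) : schSteps l := by
  induction l generalizing p with
  | nil => simp [schSteps]
  | cons s l ih =>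
    obtain ⟨hs, hl⟩ := h
    rintro t (_ | ⟨_, ht⟩)
    · tauto
    · exact ih hl t ht

namespace schSteps

variable {l : List (ℤ × ℤ)}

lemma length_le (hl : schSteps l) : (l.length : ℤ) ≤ (endPt l).1 + (endPt l).2 := by
  induction l with
  | nil => simp [endPt]
  | cons s l ih =>
    have := ih fun t ht => hl t (List.mem_cons_of_mem s ht)
    rw [endPt_cons, List.length_cons]
    rcases hl s List.mem_cons_self with rfl | rfl | rfl <;> push_cast <;> omega

lemma snd_endPt_nonneg (hl : schSteps l) : 0 ≤ (endPt l).2 := by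
  induction l with
  | nil => simp [endPt]
  | cons s l ih =>
    have := ih fun t ht => hl t (List.mem_cons_of_mem s ht)
    rw [endPt_cons]
    rcases hl s List.mem_cons_self with rfl | rfl | rfl <;> dsimp only <;> omega

lemma eq_replicate_of_snd_endPt_eq_zero (hl : schSteps l) (h0 : (endPt l).2 = 0) :
    l = List.replicate l.length (1, 0) := by
  induction l with
  | nil => rfl
  | cons s l ih =>
    have hl' : schSteps l := fun t ht => hl t (List.mem_cons_of_mem s ht)
    have := hl'.snd_endPt_nonneg
    rw [endPt_cons] at h0
    rcases hl s List.mem_cons_self with rfl | rfl | rfl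
    · rw [List.length_cons, List.replicate_succ, ← ih hl' (by dsimp only at h0; omega)]
    all_goals dsimp only at h0; omega

end schSteps

lemma okFrom_concat (D : ℤ × ℤ → Prop) (p : ℤ × ℤ) (l : List (ℤ × ℤ)) (s : ℤ × ℤ) :
    okFrom D p (l ++ [s]) ↔ okFrom D p l ∧
      (s = (1, 0) ∨ s = (0, 1) ∨ (s = (1, 1) ∧ D (p.1 + (endPt l).1, p.2 + (endPt l).2))) := by
  induction l generalizing p with
  | nil => simp [okFrom, endPt]
  | cons a l ih => simp only [List.cons_append, okFrom, ih, endPt_cons, add_assoc, and_assoc]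

lemma okFrom_replicate (D : ℤ × ℤ → Prop) (p : ℤ × ℤ) (m : ℕ) :
    okFrom D p (List.replicate m (1, 0)) := by
  induction m generalizing p with
  | zero => trivial
  | succ m ih => exact ⟨Or.inl rfl, ih _⟩

lemma LCS_finite (n k : ℕ) : (LCS n k).Finite := by
  refine (List.finite_setOf_forall_mem_length_le
    (s := {(1, 0), (0, 1), (1, 1)}) (Set.toFinite _) (n + k)).subset ?_
  rintro l ⟨hok, hend⟩
  have hl := schSteps_of_okFrom hok
  have hlen := hl.length_le
  rw [hend] at hlen
  exact ⟨fun s hs => by simpa using hl s hs, by dsimp only at hlen; omega⟩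

lemma LCS_zero_right (n : ℕ) : LCS n 0 = {List.replicate n (1, 0)} := by
  ext l
  constructor
  · rintro ⟨hok, hend⟩
    have hrep := (schSteps_of_okFrom hok).eq_replicate_of_snd_endPt_eq_zero (by rw [hend]; rfl)
    rw [hrep, endPt_replicate, Prod.mk.injEq, Nat.cast_inj] at hend
    rwa [hend.1] at hrep
  · rintro rfl
    exact ⟨okFrom_replicate _ _ _, by rw [endPt_replicate]; rfl⟩

lemma LCS_succ_succ {n k : ℕ} (h : k < n) :
    LCS (n + 1) (k + 1) =
      (· ++ [(1, 0)]) '' LCS n (k + 1) ∪ (· ++ [(0, 1)]) '' LCS (n + 1) k := by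
  ext l
  constructor
  · rintro ⟨hok, hend⟩
    obtain rfl | ⟨l, s, rfl⟩ := l.eq_nil_or_concat'
    · simp [endPt] at hend; omega
    rw [okFrom_concat] at hok
    obtain ⟨hok, hs⟩ := hok
    rw [endPt_concat, Prod.mk.injEq] at hend
    -- a diagonal last step would start at `(n, k)`, which has `k < n`
    rcases hs with rfl | rfl | ⟨rfl, hD⟩
    · refine Or.inl ⟨l, ⟨hok, Prod.ext ?_ ?_⟩, rfl⟩ <;> push_cast at hend ⊢ <;> omega
    · refine Or.inr ⟨l, ⟨hok, Prod.ext ?_ ?_⟩, rfl⟩ <;> push_cast at hend ⊢ <;> omega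
    · push_cast at hend hD; omega
  · rintro (⟨l, ⟨hok, hend⟩, rfl⟩ | ⟨l, ⟨hok, hend⟩, rfl⟩) <;>
      refine ⟨(okFrom_concat _ _ _ _).mpr ⟨hok, by tauto⟩, ?_⟩ <;>
      rw [endPt_concat, hend] <;> push_cast <;> rfl

lemma card_LCS_zero_right (n : ℕ) : Nat.card (LCS n 0) = 1 := by
  rw [LCS_zero_right, Nat.card_unique]

lemma card_LCS_succ_succ {n k : ℕ} (h : k < n) :
    Nat.card (LCS (n + 1) (k + 1)) = Nat.card (LCS n (k + 1)) + Nat.card (LCS (n + 1) k) := by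
  have hdisj : Disjoint ((· ++ [((1 : ℤ), (0 : ℤ))]) '' LCS n (k + 1))
      ((· ++ [(0, 1)]) '' LCS (n + 1) k) := by
    rw [Set.disjoint_left]
    rintro _ ⟨a, _, rfl⟩ ⟨b, _, hb⟩
    simpa using congrArg List.getLast? hb
  simp only [Nat.card_coe_set_eq]
  rw [LCS_succ_succ h,
    Set.ncard_union_eq hdisj ((LCS_finite _ _).image _) ((LCS_finite _ _).image _),
    Set.ncard_image_of_injective _ (List.append_left_injective _),
    Set.ncard_image_of_injective _ (List.append_left_injective _)]

lemma fCS_zero : fCS 0 = 1 := card_LCS_zero_right 0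

lemma constantCoeff_FGF : constantCoeff FGF = 1 := by
  simp [FGF, ← coeff_zero_eq_constantCoeff_apply, fCS_zero]

lemma catalanGF_eq_map_catalanSeries : catalanGF = map (Nat.castRingHom ℤ) catalanSeries := by
  ext n
  simp [catalanGF]

lemma constantCoeff_catalanGF : constantCoeff catalanGF = 1 := by
  simp [catalanGF, ← coeff_zero_eq_constantCoeff_apply]

lemma catalanGF_eq : catalanGF = 1 + X * catalanGF ^ 2 := by
  have := congrArg (map (Nat.castRingHom ℤ)) catalanSeries_sq_mul_X_add_one
  rw [← catalanGF_eq_map_catalanSeries, map_add, map_mul, map_pow, map_X, map_one,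
    ← catalanGF_eq_map_catalanSeries] at this
  linear_combination -this

lemma coeff_succ_mul_catalanGF_pow_succ (G : PowerSeries ℤ) (k r : ℕ) :
    coeff (k + 1) (G * catalanGF ^ (r + 1)) =
      coeff (k + 1) (G * catalanGF ^ r) + coeff k (G * catalanGF ^ (r + 2)) := by
  have : G * catalanGF ^ (r + 1) = G * catalanGF ^ r + X * (G * catalanGF ^ (r + 2)) := by
    linear_combination G * catalanGF ^ r * catalanGF_eq
  rw [this, map_add, coeff_succ_X_mul]

lemma card_LCS_add_eq_coeff (k r : ℕ) :
    (Nat.card (LCS (k + r) k) : ℤ) = coeff k (FGF * catalanGF ^ r) := by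
  induction k generalizing r with
  | zero =>
    rw [card_LCS_zero_right]
    simp [constantCoeff_FGF, constantCoeff_catalanGF]
  | succ k ihk =>
    induction r with
    | zero => simp [FGF, fCS]
    | succ r ihr =>
      rw [← add_assoc, card_LCS_succ_succ (by omega), Nat.cast_add, ihr,
        show k + 1 + r + 1 = k + (r + 2) by omega, ihk, coeff_succ_mul_catalanGF_pow_succ]

/-- for n ≥ k, the number of paths to (n,k) in L_CS equals
Σ_{m=0}^{k} f_m · [x^{k-m}] C(x)^{n-k}. -/
theorem LCS_count (n k : ℕ) (h : k ≤ n) :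
    (Nat.card ↥(LCS n k) : ℤ) =
      ∑ m ∈ Finset.range (k + 1),
        (fCS m : ℤ) * PowerSeries.coeff (k - m) (catalanGF ^ (n - k)) := by
  obtain ⟨r, rfl⟩ := Nat.exists_eq_add_of_le h
  rw [Nat.add_sub_cancel_left, card_LCS_add_eq_coeff, coeff_mul,
    Nat.sum_antidiagonal_eq_sum_range_succ_mk]
  simp [FGF]
end

section
/- Any path from (0,0) to (n,k) with n > k in the lattice L_CS decomposes uniquely as a path from (0,0) to (m,m) for some 0 ≤ m ≤ k followed by a path from (m,m) to (n,k) that does not revisit the diagonal y = x; consequently the count of paths to (n,k) equals Σ_{m=0}^{k} f_m · d_{n-m, k-m}, where f_m is the number of paths to (m,m) and d_{p,q} is the number of paths from (0,0) to (p,q) staying strictly below the diagonal after the start. -/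
open Finset PowerSeries

/-- Number of unit-step paths from (0,0) to (p,q) strictly below the diagonal
after the start. -/
noncomputable def dCount (p q : ℕ) : ℕ :=
  Nat.card ↥{l : List (ℤ × ℤ) |
    unitSteps l ∧ endPt l = ((p : ℤ), (q : ℤ)) ∧ strictBelowAfterStart l}

/-!
Cut the path after its last visit to the diagonal. From then on it stays strictly below the
diagonal, where the diagonal step is forbidden, so the tail uses unit steps only. Existence
goes by induction on the last step: either the path before it already ends strictly below the
diagonal, or it ends on the diagonal and the last step is `(1,0)`. Uniqueness holds because a
nonempty prefix of a tail that ends on the diagonal would be a return to the diagonal. Sorting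
the paths by the diagonal point `(m,m)` where they are cut gives the count.
-/

lemma mk_add_mk_eq_add (p s : ℤ × ℤ) : (p.1 + s.1, p.2 + s.2) = p + s := rfl

lemma endPt_eq_sum (l : List (ℤ × ℤ)) : endPt l = l.sum := by
  induction l with
  | nil => rfl
  | cons s l ih => rw [List.sum_cons, ← ih]; rfl

lemma pts_eq_map_inits (l : List (ℤ × ℤ)) : pts l = l.inits.map endPt := by
  refine List.ext_getElem (by simp [pts]) fun i _ _ => ?_
  simp [pts, mk_add_mk_eq_add, Prod.mk_zero_zero, List.getElem_scanl, endPt_eq_sum,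
    List.sum_eq_foldl]

lemma mem_pts {l : List (ℤ × ℤ)} {p : ℤ × ℤ} : p ∈ pts l ↔ ∃ a, a <+: l ∧ endPt a = p := by
  simp [pts_eq_map_inits]

lemma okFrom_append {D : ℤ × ℤ → Prop} {p : ℤ × ℤ} {a b : List (ℤ × ℤ)} :
    okFrom D p (a ++ b) ↔ okFrom D p a ∧ okFrom D (p + endPt a) b := by
  induction a generalizing p with
  | nil => simp [okFrom, endPt_eq_sum]
  | cons s a ih => simp [okFrom, ih, endPt_eq_sum, mk_add_mk_eq_add, add_assoc, and_assoc]

lemma endPt_append (a b : List (ℤ × ℤ)) : endPt (a ++ b) = endPt a + endPt b := by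
  simp [endPt_eq_sum]

@[simp]
lemma endPt_singleton (s : ℤ × ℤ) : endPt [s] = s := by simp [endPt]

lemma unitSteps.schSteps {l : List (ℤ × ℤ)} (h : unitSteps l) : schSteps l :=
  fun s hs => (h s hs).imp_right Or.inl

lemma okFrom_of_unitSteps {D : ℤ × ℤ → Prop} {l : List (ℤ × ℤ)} (h : unitSteps l)
    (p : ℤ × ℤ) : okFrom D p l := by
  induction l generalizing p with
  | nil => trivial
  | cons s l ih =>
    simp only [unitSteps, List.forall_mem_cons] at h
    exact ⟨by tauto, ih h.2 _⟩

lemma schSteps.endPt_nonneg {l : List (ℤ × ℤ)} (h : schSteps l) :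
    0 ≤ (endPt l).1 ∧ 0 ≤ (endPt l).2 := by
  have : 0 ≤ l.sum :=
    List.sum_nonneg fun s hs => by rcases h s hs with rfl | rfl | rfl <;> simp [Prod.le_def]
  simpa [Prod.le_def, endPt_eq_sum] using this

lemma schSteps.length_le_s14 {l : List (ℤ × ℤ)} (h : schSteps l) :
    (l.length : ℤ) ≤ (endPt l).1 + (endPt l).2 := by
  induction l with
  | nil => simp [endPt]
  | cons s l ih =>
    simp only [schSteps, List.forall_mem_cons] at h
    have := ih h.2
    rcases h.1 with rfl | rfl | rfl <;> simp [endPt_eq_sum] at this ⊢ <;> omega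

theorem exists_diag_split {l : List (ℤ × ℤ)} (hl : okFrom (fun p => p.1 ≤ p.2) (0, 0) l)
    (hbelow : (endPt l).2 < (endPt l).1) :
    ∃ a b, l = a ++ b ∧ okFrom (fun p => p.1 ≤ p.2) (0, 0) a ∧ (endPt a).1 = (endPt a).2 ∧
      unitSteps b ∧ strictBelowAfterStart b := by
  induction l using List.reverseRecOn with
  | nil => simp [endPt] at hbelow
  | append_singleton l s ih =>
    obtain ⟨hpre, hs, -⟩ := okFrom_append.1 hl
    simp only [endPt_append, endPt_singleton, Prod.fst_add, Prod.snd_add, Prod.mk_zero_zero,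
      zero_add] at hbelow hs
    by_cases hl_below : (endPt l).2 < (endPt l).1
    · obtain ⟨a, b, rfl, ha, hdiag, hb, hbs⟩ := ih hpre hl_below
      have hs : s = (1, 0) ∨ s = (0, 1) := by
        rcases hs with hs | hs | ⟨-, hs⟩ <;> [exact .inl hs; exact .inr hs; omega]
      refine ⟨a, b ++ [s], by simp, ha, hdiag, ?_, ?_⟩
      · simp only [unitSteps, List.mem_append, List.mem_singleton]
        rintro t (ht | rfl)
        exacts [hb t ht, hs]
      · rintro p hp hne
        obtain ⟨c, hc, rfl⟩ := mem_pts.1 hp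
        rcases List.prefix_concat_iff.1 hc with rfl | hc
        · simp only [endPt_append, endPt_singleton, Prod.fst_add, Prod.snd_add] at hbelow ⊢
          omega
        · exact hbs _ (mem_pts.2 ⟨c, hc, rfl⟩) hne
    · obtain ⟨rfl, hdiag⟩ : s = (1, 0) ∧ (endPt l).1 = (endPt l).2 := by
        rcases hs with rfl | rfl | ⟨rfl, -⟩ <;> simp at hbelow ⊢ <;> omega
      refine ⟨l, [(1, 0)], rfl, hpre, hdiag, by simp [unitSteps], ?_⟩
      simp [strictBelowAfterStart, pts]

lemma eq_nil_of_prefix_of_diag {b c : List (ℤ × ℤ)} (hb : schSteps b)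
    (hbs : strictBelowAfterStart b) (hc : c <+: b) (hdiag : (endPt c).1 = (endPt c).2) :
    c = [] := by
  have hlen := schSteps.length_le_s14 fun s hs => hb s (hc.subset hs)
  by_cases h0 : endPt c = (0, 0)
  · simp only [h0, add_zero] at hlen
    exact List.length_eq_zero_iff.1 (by omega)
  · have := hbs _ (mem_pts.2 ⟨c, hc, rfl⟩) h0
    omega

theorem diag_split_unique {a b a' b' : List (ℤ × ℤ)} (h : a ++ b = a' ++ b')
    (ha : (endPt a).1 = (endPt a).2) (ha' : (endPt a').1 = (endPt a').2)
    (hb : schSteps b) (hbs : strictBelowAfterStart b)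
    (hb' : schSteps b') (hbs' : strictBelowAfterStart b') : a = a' := by
  rcases List.append_eq_append_iff.1 h with ⟨c, rfl, rfl⟩ | ⟨c, rfl, rfl⟩
  · simp only [endPt_append, Prod.fst_add, Prod.snd_add] at ha'
    simp [eq_nil_of_prefix_of_diag hb hbs (List.prefix_append c b') (by omega)]
  · simp only [endPt_append, Prod.fst_add, Prod.snd_add] at ha
    simp [eq_nil_of_prefix_of_diag hb' hbs' (List.prefix_append c b) (by omega)]

def strictPaths (p q : ℕ) : Set (List (ℤ × ℤ)) :=
  {l | unitSteps l ∧ endPt l = ((p : ℤ), (q : ℤ)) ∧ strictBelowAfterStart l}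

lemma endPt_diag_of_mem_LCS {m : ℕ} {a : List (ℤ × ℤ)} (ha : a ∈ LCS m m) :
    (endPt a).1 = (endPt a).2 := by
  rw [ha.2]

theorem exists_LCS_split {n k : ℕ} (h : k < n) {l : List (ℤ × ℤ)} (hl : l ∈ LCS n k) :
    ∃ m ≤ k, ∃ a ∈ LCS m m, ∃ b ∈ strictPaths (n - m) (k - m), l = a ++ b := by
  obtain ⟨hok, hend⟩ := hl
  obtain ⟨a, b, rfl, ha, hdiag, hb, hbs⟩ :=
    exists_diag_split hok (by rw [hend]; exact Int.ofNat_lt.2 h)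
  obtain ⟨m, hm⟩ := Int.eq_ofNat_of_zero_le (schSteps_of_okFrom ha).endPt_nonneg.1
  have hma : endPt a = ((m : ℤ), (m : ℤ)) := Prod.ext hm (by rw [← hdiag, hm])
  have hb₂ := hb.schSteps.endPt_nonneg.2
  simp only [endPt_append, hma, Prod.ext_iff, Prod.fst_add, Prod.snd_add] at hend
  refine ⟨m, by omega, a, ⟨ha, hma⟩, b, ⟨hb, ?_, hbs⟩, rfl⟩
  ext <;> simp <;> omega

theorem existsUnique_LCS_split {n k : ℕ} (h : k < n) {l : List (ℤ × ℤ)} (hl : l ∈ LCS n k) :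
    ∃! pr : List (ℤ × ℤ) × List (ℤ × ℤ), l = pr.1 ++ pr.2 ∧ (∃ m ≤ k, pr.1 ∈ LCS m m) ∧
      unitSteps pr.2 ∧ strictBelowAfterStart pr.2 := by
  obtain ⟨m, hmk, a, ha, b, ⟨hb, -, hbs⟩, rfl⟩ := exists_LCS_split h hl
  refine ⟨(a, b), ⟨rfl, ⟨m, hmk, ha⟩, hb, hbs⟩, ?_⟩
  rintro ⟨a', b'⟩ ⟨heq, ⟨m', -, ha'⟩, hb', hbs'⟩
  dsimp only at heq ha' hb' hbs'
  obtain rfl := diag_split_unique heq (endPt_diag_of_mem_LCS ha) (endPt_diag_of_mem_LCS ha')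
    hb.schSteps hbs hb'.schSteps hbs'
  rw [List.append_cancel_left heq]

lemma append_mem_LCS {m n k : ℕ} (hmk : m ≤ k) (hkn : k ≤ n) {a b : List (ℤ × ℤ)}
    (ha : a ∈ LCS m m) (hb : b ∈ strictPaths (n - m) (k - m)) : a ++ b ∈ LCS n k := by
  refine ⟨okFrom_append.2 ⟨ha.1, okFrom_of_unitSteps hb.1 _⟩, ?_⟩
  rw [endPt_append, ha.2, hb.2.1]
  ext <;> simp <;> omega

def joinSplit {n k : ℕ} (hkn : k ≤ n)
    (x : Σ m : Fin (k + 1), LCS m m × strictPaths (n - m) (k - m)) : LCS n k :=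
  ⟨x.2.1 ++ x.2.2, append_mem_LCS (Nat.lt_succ_iff.1 x.1.2) hkn x.2.1.2 x.2.2.2⟩

theorem joinSplit_bijective {n k : ℕ} (h : k < n) : Function.Bijective (joinSplit h.le) := by
  constructor
  · rintro ⟨m, ⟨a, ha⟩, ⟨b, hb⟩⟩ ⟨m', ⟨a', ha'⟩, ⟨b', hb'⟩⟩ heq
    have heq : a ++ b = a' ++ b' := congrArg Subtype.val heq
    obtain rfl := diag_split_unique heq (endPt_diag_of_mem_LCS ha) (endPt_diag_of_mem_LCS ha')
      hb.1.schSteps hb.2.2 hb'.1.schSteps hb'.2.2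
    obtain rfl := List.append_cancel_left heq
    obtain rfl : m = m' := Fin.ext (by simpa using ha.2.symm.trans ha'.2)
    rfl
  · rintro ⟨l, hl⟩
    obtain ⟨m, hmk, a, ha, b, hb, rfl⟩ := exists_LCS_split h hl
    exact ⟨⟨⟨m, Nat.lt_succ_of_le hmk⟩, ⟨a, ha⟩, ⟨b, hb⟩⟩, rfl⟩

lemma finite_setOf_schSteps_endPt (e : ℤ × ℤ) : {l | schSteps l ∧ endPt l = e}.Finite := by
  let S : Set (ℤ × ℤ) := {(1, 0), (0, 1), (1, 1)}
  have : Finite S := Set.toFinite S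
  refine ((List.finite_length_le S (e.1 + e.2).toNat).image (List.map Subtype.val)).subset ?_
  rintro l ⟨hl, rfl⟩
  have hlen := hl.length_le_s14
  lift l to List S using hl
  exact ⟨l, by simp at hlen ⊢; omega, rfl⟩

lemma strictPaths_finite (p q : ℕ) : (strictPaths p q).Finite :=
  (finite_setOf_schSteps_endPt _).subset fun _ hl => ⟨hl.1.schSteps, hl.2.1⟩

/-- for n > k, every path to (n,k) in L_CS decomposes uniquely into a
path to some diagonal point (m,m) followed by a path never revisiting the diagonal,
and consequently the count of paths to (n,k) equals Σ_{m=0}^{k} f_m · d_{n-m,k-m}. -/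
theorem LCS_decomposition (n k : ℕ) (h : k < n) :
    (∀ l ∈ LCS n k, ∃! pr : List (ℤ × ℤ) × List (ℤ × ℤ),
        l = pr.1 ++ pr.2 ∧ (∃ m ≤ k, pr.1 ∈ LCS m m) ∧
        unitSteps pr.2 ∧ strictBelowAfterStart pr.2) ∧
    Nat.card ↥(LCS n k) =
      ∑ m ∈ Finset.range (k + 1), fCS m * dCount (n - m) (k - m) := by
  refine ⟨fun l hl => existsUnique_LCS_split h hl, ?_⟩
  have := fun m : Fin (k + 1) => (LCS_finite m m).to_subtype
  have := fun m : Fin (k + 1) => (strictPaths_finite (n - m) (k - m)).to_subtype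
  rw [← Nat.card_congr (Equiv.ofBijective _ (joinSplit_bijective h)), Nat.card_sigma,
    ← Fin.sum_univ_eq_sum_range]
  simp only [Nat.card_prod, fCS, dCount, strictPaths]
end

section
/- In ℤ[[x]], the number of paths from (0,0) to (⌊n/2⌋, ⌈n/2⌉) in L*_CS equals [x^n] F*(x²)·(1 + x·S(x²)). -/
open Finset PowerSeries

namespace LCSwork

abbrev St := ℤ × ℤ

def dl (s : St) : ℤ := s.2 - s.1

def dsum (l : List St) : ℤ := (l.map dl).sum

@[simp] lemma dsum_nil : dsum ([] : List St) = 0 := rfl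
@[simp] lemma dsum_cons (s : St) (l : List St) : dsum (s :: l) = dl s + dsum l := by
  simp [dsum]
@[simp] lemma dsum_append (a b : List St) : dsum (a ++ b) = dsum a + dsum b := by
  simp [dsum]

@[simp] lemma endPt_nil : endPt ([] : List St) = (0, 0) := rfl
@[simp] lemma endPt_cons (s : St) (l : List St) :
    endPt (s :: l) = (s.1 + (endPt l).1, s.2 + (endPt l).2) := by
  simp [endPt]
@[simp] lemma endPt_append (a b : List St) :
    endPt (a ++ b) = ((endPt a).1 + (endPt b).1, (endPt a).2 + (endPt b).2) := by
  simp [endPt]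

lemma dsum_eq (l : List St) : dsum l = (endPt l).2 - (endPt l).1 := by
  induction l with
  | nil => simp
  | cons s t ih => simp [ih, dl]; ring

def ok : ℤ → List St → Prop
  | _, [] => True
  | d, s :: l => (s = (1,0) ∨ s = (0,1) ∨ (s = (1,1) ∧ 0 < d)) ∧ ok (d + dl s) l

def pos : ℤ → List St → Prop
  | _, [] => True
  | d, s :: l => 1 ≤ d + dl s ∧ pos (d + dl s) l

@[simp] lemma ok_nil (d : ℤ) : ok d [] := trivial
@[simp] lemma ok_cons {d : ℤ} {s : St} {l : List St} :
    ok d (s :: l) ↔ (s = (1,0) ∨ s = (0,1) ∨ (s = (1,1) ∧ 0 < d)) ∧ ok (d + dl s) l :=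
  Iff.rfl
@[simp] lemma pos_nil (d : ℤ) : pos d [] := trivial
@[simp] lemma pos_cons {d : ℤ} {s : St} {l : List St} :
    pos d (s :: l) ↔ 1 ≤ d + dl s ∧ pos (d + dl s) l := Iff.rfl

lemma ok_append {a b : List St} {d : ℤ} :
    ok d (a ++ b) ↔ ok d a ∧ ok (d + dsum a) b := by
  induction a generalizing d with
  | nil => simp
  | cons s t ih => simp [ih, and_assoc, add_assoc]

lemma pos_append {a b : List St} {d : ℤ} :
    pos d (a ++ b) ↔ pos d a ∧ pos (d + dsum a) b := by
  induction a generalizing d with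
  | nil => simp
  | cons s t ih => simp [ih, and_assoc, add_assoc]

lemma pos_mono {l : List St} {d d' : ℤ} (h : d ≤ d') (hp : pos d l) : pos d' l := by
  induction l generalizing d d' with
  | nil => trivial
  | cons s t ih =>
    exact ⟨le_trans hp.1 (by have := hp.1; omega), ih (by omega) hp.2⟩

lemma pos_last {l : List St} {d : ℤ} (hp : pos d l) (hne : l ≠ []) : 1 ≤ d + dsum l := by
  induction l generalizing d with
  | nil => simp at hne
  | cons s t ih =>
    rcases t with _ | ⟨u, v⟩
    · simpa using hp.1
    · have := ih hp.2 (by simp)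
      simpa [add_assoc] using this

lemma ok_shift {l : List St} {d : ℤ} (hd : 1 ≤ d) (hp : pos d l) :
    ok d l ↔ ok (d + 1) l := by
  induction l generalizing d with
  | nil => simp
  | cons s t ih =>
    have h1 : 1 ≤ d + dl s := hp.1
    have := ih (d := d + dl s) h1 hp.2
    constructor
    · rintro ⟨h, ht⟩
      refine ⟨?_, ?_⟩
      · rcases h with h | h | ⟨h, _⟩
        · exact Or.inl h
        · exact Or.inr (Or.inl h)
        · exact Or.inr (Or.inr ⟨h, by omega⟩)
      · have h3 : d + 1 + dl s = d + dl s + 1 := by ring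
        rw [h3]
        exact this.mp ht
    · rintro ⟨h, ht⟩
      refine ⟨?_, ?_⟩
      · rcases h with h | h | ⟨h, _⟩
        · exact Or.inl h
        · exact Or.inr (Or.inl h)
        · exact Or.inr (Or.inr ⟨h, by omega⟩)
      · apply this.mpr
        have h3 : d + 1 + dl s = d + dl s + 1 := by ring
        rw [← h3]
        exact ht

lemma endPt_nonneg {l : List St} {d : ℤ} (h : ok d l) :
    0 ≤ (endPt l).1 ∧ 0 ≤ (endPt l).2 := by
  induction l generalizing d with
  | nil => simp
  | cons s t ih =>
    obtain ⟨h1, h2⟩ := h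
    have := ih h2
    rcases h1 with h | h | ⟨h, _⟩ <;> subst h <;> simp <;> omega

lemma length_le {l : List St} {d : ℤ} (h : ok d l) :
    (l.length : ℤ) ≤ (endPt l).1 + (endPt l).2 := by
  induction l generalizing d with
  | nil => simp
  | cons s t ih =>
    obtain ⟨h1, h2⟩ := h
    have := ih h2
    rcases h1 with h | h | ⟨h, _⟩ <;> subst h <;> simp <;> omega

lemma steps_ok {l : List St} {d : ℤ} (h : ok d l) :
    ∀ s ∈ l, s = (1,0) ∨ s = (0,1) ∨ s = (1,1) := by
  induction l generalizing d with
  | nil => simp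
  | cons s t ih =>
    intro u hu
    rcases List.mem_cons.mp hu with rfl | hu
    · rcases h.1 with h1 | h1 | ⟨h1, _⟩
      · exact Or.inl h1
      · exact Or.inr (Or.inl h1)
      · exact Or.inr (Or.inr h1)
    · exact ih h.2 u hu


/-! ### Sets of paths -/

def T (d n k : ℤ) : Set (List St) := {l | ok d l ∧ endPt l = (n, k)}
def P (n k : ℤ) : Set (List St) := {l | ok 1 l ∧ pos 1 l ∧ endPt l = (n, k)}
def P2 (n k : ℤ) : Set (List St) := {l | ok 2 l ∧ pos 2 l ∧ endPt l = (n, k)}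
def E (n k : ℤ) : Set (List St) := {l | ok 2 l ∧ pos 1 l ∧ endPt l = (n, k)}

def code (s : St) : Fin 3 := if s = (0,1) then 1 else if s = (1,1) then 2 else 0
def decode : Fin 3 → St := ![(1,0), (0,1), (1,1)]

lemma decode_code {s : St} (h : s = (1,0) ∨ s = (0,1) ∨ s = (1,1)) :
    decode (code s) = s := by
  rcases h with rfl | rfl | rfl <;> norm_num [code, decode, Prod.ext_iff] <;> exact ⟨rfl, rfl⟩

lemma finite_T (d n k : ℤ) : (T d n k).Finite := by
  apply Set.Finite.of_finite_image (f := List.map code)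
  · apply Set.Finite.subset (List.finite_length_le (Fin 3) (n + k).toNat)
    rintro m ⟨l, ⟨hok, hend⟩, rfl⟩
    simp only [Set.mem_setOf_eq, List.length_map]
    have := length_le hok
    rw [hend] at this
    omega
  · intro l₁ h₁ l₂ h₂ he
    have key : ∀ l : List St, (∀ s ∈ l, s = (1,0) ∨ s = (0,1) ∨ s = (1,1)) →
        (l.map code).map decode = l := by
      intro l hl
      rw [List.map_map]
      conv_rhs => rw [← List.map_id l]
      exact List.map_congr_left fun s hs => decode_code (hl s hs)
    rw [← key l₁ (steps_ok h₁.1), ← key l₂ (steps_ok h₂.1), he]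

lemma P_subset (n k : ℤ) : P n k ⊆ T 1 n k := fun l hl => ⟨hl.1, hl.2.2⟩
lemma P2_subset (n k : ℤ) : P2 n k ⊆ T 2 n k := fun l hl => ⟨hl.1, hl.2.2⟩
lemma E_subset (n k : ℤ) : E n k ⊆ T 2 n k := fun l hl => ⟨hl.1, hl.2.2⟩

lemma finite_P (n k : ℤ) : (P n k).Finite := (finite_T 1 n k).subset (P_subset n k)
lemma finite_P2 (n k : ℤ) : (P2 n k).Finite := (finite_T 2 n k).subset (P2_subset n k)
lemma finite_E (n k : ℤ) : (E n k).Finite := (finite_T 2 n k).subset (E_subset n k)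

lemma nil_of_endPt_zero {l : List St} {d : ℤ} (hok : ok d l) (h : endPt l = (0, 0)) :
    l = [] := by
  have := length_le hok
  rw [h] at this
  cases l with
  | nil => rfl
  | cons s t => simp at this; omega

lemma T_zero (d : ℤ) : T d 0 0 = {[]} := by
  ext l
  constructor
  · rintro ⟨hok, hend⟩
    exact nil_of_endPt_zero hok hend
  · rintro rfl
    exact ⟨trivial, rfl⟩

lemma P_zero : P 0 0 = {[]} := by
  ext l
  constructor
  · rintro ⟨hok, _, hend⟩
    exact nil_of_endPt_zero hok hend
  · rintro rfl
    exact ⟨trivial, trivial, rfl⟩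

lemma E_eq_P (n k : ℤ) : E n k = P n k := by
  ext l
  have : pos 1 l → (ok 1 l ↔ ok 2 l) := fun hp => ok_shift le_rfl hp
  constructor
  · rintro ⟨hok, hp, hend⟩
    exact ⟨(this hp).mpr hok, hp, hend⟩
  · rintro ⟨hok, hp, hend⟩
    exact ⟨(this hp).mp hok, hp, hend⟩


@[simp] lemma dl_R : dl ((1:ℤ), (0:ℤ)) = -1 := by norm_num [dl]
@[simp] lemma dl_U : dl ((0:ℤ), (1:ℤ)) = 1 := by norm_num [dl]
@[simp] lemma dl_D : dl ((1:ℤ), (1:ℤ)) = 0 := by norm_num [dl]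

/-! ### Cardinality utilities -/

lemma card_prod_sets (s t : Set (List St)) :
    Nat.card ↥(s ×ˢ t) = Nat.card ↥s * Nat.card ↥t := by
  rw [Nat.card_congr (Equiv.Set.prod s t), Nat.card_prod]

lemma ncard_biUnion_range {A : ℕ → Set (List St)} (n : ℕ)
    (hfin : ∀ i, (A i).Finite)
    (hdisj : ∀ i j, i ≠ j → Disjoint (A i) (A j)) :
    (⋃ i ∈ Finset.range n, A i).ncard = ∑ i ∈ Finset.range n, (A i).ncard := by
  induction n with
  | zero => simp
  | succ m ih =>
    rw [Finset.range_add_one, Finset.set_biUnion_insert, Finset.sum_insert (by simp)]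
    have hd : Disjoint (A m) (⋃ x ∈ Finset.range m, A x) := by
      rw [Set.disjoint_left]
      intro x hx hx'
      obtain ⟨i, hi, hxi⟩ := Set.mem_iUnion₂.mp hx'
      exact Set.disjoint_left.mp (hdisj m i (by simp at hi; omega)) hx hxi
    have hf2 : (⋃ x ∈ Finset.range m, A x).Finite :=
      Set.Finite.biUnion (Finset.range m).finite_toSet fun i _ => hfin i
    rw [Set.ncard_union_eq hd (hfin m) hf2, ih]

/-! ### Head decomposition for positive paths -/

lemma P_head (n k : ℤ) (h : ¬(n = 0 ∧ k = 0)) :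
    P n k = (List.cons ((0:ℤ),(1:ℤ)) '' P2 n (k-1)) ∪
      (List.cons ((1:ℤ),(1:ℤ)) '' P (n-1) (k-1)) := by
  ext l
  constructor
  · rintro ⟨hok, hp, hend⟩
    cases l with
    | nil =>
      exfalso
      apply h
      simp only [endPt_nil, Prod.mk.injEq] at hend
      exact ⟨hend.1.symm, hend.2.symm⟩
    | cons s t =>
      have hp1 := (pos_cons.mp hp).1
      have hp2 := (pos_cons.mp hp).2
      have hok2 := hok.2
      have hend' := hend
      rw [endPt_cons, Prod.mk.injEq] at hend'
      rcases hok.1 with rfl | rfl | ⟨rfl, _⟩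
      · simp at hp1
      · left
        refine ⟨t, ⟨?_, ?_, ?_⟩, rfl⟩
        · simpa using hok2
        · simpa using hp2
        · simp only at hend'
          rw [Prod.ext_iff]
          constructor <;> simp <;> omega
      · right
        refine ⟨t, ⟨?_, ?_, ?_⟩, rfl⟩
        · simpa using hok2
        · simpa using hp2
        · simp only at hend'
          rw [Prod.ext_iff]
          constructor <;> simp <;> omega
  · rintro (⟨t, ⟨hok, hp, hend⟩, rfl⟩ | ⟨t, ⟨hok, hp, hend⟩, rfl⟩)
    · refine ⟨⟨Or.inr (Or.inl rfl), by simpa using hok⟩, ?_, ?_⟩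
      · exact pos_cons.mpr ⟨by simp [dl], by simpa [dl] using hp⟩
      · rw [endPt_cons, hend]; simp
    · refine ⟨⟨Or.inr (Or.inr ⟨rfl, one_pos⟩), by simpa [dl] using hok⟩, ?_, ?_⟩
      · exact pos_cons.mpr ⟨by simp [dl], by simpa [dl] using hp⟩
      · rw [endPt_cons, hend]; simp

lemma card_P_head (n k : ℤ) (h : ¬(n = 0 ∧ k = 0)) :
    Nat.card ↥(P n k) = Nat.card ↥(P2 n (k-1)) + Nat.card ↥(P (n-1) (k-1)) := by
  rw [Nat.card_coe_set_eq, Nat.card_coe_set_eq, Nat.card_coe_set_eq,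
    P_head n k h,
    Set.ncard_union_eq ?_ ((finite_P2 _ _).image _) ((finite_P _ _).image _),
    Set.ncard_image_of_injective _ List.cons_injective,
    Set.ncard_image_of_injective _ List.cons_injective]
  rw [Set.disjoint_left]
  rintro l ⟨t, _, rfl⟩ ⟨t', _, he⟩
  have := (List.cons_eq_cons.mp he).1
  simp [Prod.ext_iff] at this


/-! ### Split at the last visit to level 0 (for paths ending at level 1) -/

lemma existA : ∀ (l : List St) (d : ℤ), ok d l → 1 ≤ d + dsum l → (d ≤ 0 ∨ ¬ pos d l) →
    ∃ a b, l = a ++ ((0:ℤ),(1:ℤ)) :: b ∧ d + dsum a = 0 ∧ pos 1 b := by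
  intro l
  induction l with
  | nil =>
    intro d _ h1 h2
    simp only [dsum_nil, add_zero] at h1
    rcases h2 with h2 | h2
    · omega
    · exact absurd trivial h2
  | cons s t ih =>
    intro d hok h1 h2
    by_cases hp : 1 ≤ d + dl s ∧ pos (d + dl s) t
    · have hd : d ≤ 0 := by
        rcases h2 with h2 | h2
        · exact h2
        · exact absurd (pos_cons.mpr hp) h2
      have hp1 := hp.1
      have hs : s = ((0:ℤ),(1:ℤ)) ∧ d = 0 := by
        rcases hok.1 with rfl | rfl | ⟨rfl, hgt⟩
        · simp [dl] at hp1; omega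
        · refine ⟨rfl, ?_⟩; simp [dl] at hp1; omega
        · omega
      obtain ⟨rfl, rfl⟩ := hs
      refine ⟨[], t, by simp, by simp, ?_⟩
      have := hp.2
      simpa [dl] using this
    · push_neg at hp
      have h2' : d + dl s ≤ 0 ∨ ¬ pos (d + dl s) t := by
        by_cases hh : 1 ≤ d + dl s
        · exact Or.inr (hp hh)
        · exact Or.inl (by omega)
      have h1' : 1 ≤ (d + dl s) + dsum t := by
        simp only [dsum_cons] at h1; omega
      obtain ⟨a, b, heq, ha, hb⟩ := ih (d + dl s) hok.2 h1' h2'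
      refine ⟨s :: a, b, by rw [heq]; simp, ?_, hb⟩
      simp only [dsum_cons]
      omega

lemma uniqA {d : ℤ} {a₁ b₁ a₂ b₂ : List St}
    (he : a₁ ++ ((0:ℤ),(1:ℤ)) :: b₁ = a₂ ++ ((0:ℤ),(1:ℤ)) :: b₂)
    (h₁ : d + dsum a₁ = 0) (h₂ : d + dsum a₂ = 0)
    (p₁ : pos 1 b₁) (p₂ : pos 1 b₂) : a₁ = a₂ ∧ b₁ = b₂ := by
  suffices h : a₁ = a₂ by
    subst h
    exact ⟨rfl, List.cons_injective (List.append_cancel_left he)⟩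
  have key : ∀ (x₁ y₁ x₂ y₂ : List St), x₁ ++ ((0:ℤ),(1:ℤ)) :: y₁ = x₂ ++ ((0:ℤ),(1:ℤ)) :: y₂ →
      d + dsum x₁ = 0 → d + dsum x₂ = 0 → pos 1 y₁ →
      (∃ r, x₂ = x₁ ++ r ∧ ((0:ℤ),(1:ℤ)) :: y₁ = r ++ ((0:ℤ),(1:ℤ)) :: y₂) → x₁ = x₂ := by
    intro x₁ y₁ x₂ y₂ he' hx₁ hx₂ py₁ ⟨r, hr1, hr2⟩
    cases r with
    | nil => simpa using hr1.symm
    | cons u r' =>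
      exfalso
      rw [List.cons_append] at hr2
      obtain ⟨rfl, hy⟩ := List.cons_eq_cons.mp hr2
      have hds : dsum x₂ = dsum x₁ + 1 + dsum r' := by
        rw [hr1]; simp [dl]; ring
      have hr' : dsum r' = -1 := by omega
      cases r' with
      | nil => simp at hr'
      | cons v r'' =>
        subst hy
        have := pos_append.mp py₁
        have hlast := pos_last this.1 (by simp)
        omega
  rcases List.append_eq_append_iff.mp he with ⟨r, hr1, hr2⟩ | ⟨r, hr1, hr2⟩
  · exact key a₁ b₁ a₂ b₂ he h₁ h₂ p₁ ⟨r, hr1, hr2⟩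
  · exact (key a₂ b₂ a₁ b₁ he.symm h₂ h₁ p₂ ⟨r, hr1, hr2⟩).symm

/-! ### Split at the first visit to level 1 (for positive paths from level 2) -/

lemma existB : ∀ (l : List St) (d : ℤ), 2 ≤ d → ok d l → pos d l → d + dsum l = 1 →
    ∃ a b, l = a ++ ((1:ℤ),(0:ℤ)) :: b ∧ pos (d - 1) a ∧ d + dsum a = 2 := by
  intro l
  induction l with
  | nil =>
    intro d hd _ _ h1
    simp only [dsum_nil, add_zero] at h1
    omega
  | cons s t ih =>
    intro d hd hok hp h1
    by_cases hlev : d + dl s ≤ 1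
    · have h1' : 1 ≤ d + dl s := hp.1
      have hdl : dl s = 1 - d := by omega
      have hs : s = ((1:ℤ),(0:ℤ)) ∧ d = 2 := by
        rcases hok.1 with rfl | rfl | ⟨rfl, _⟩
        · simp [dl] at hdl; exact ⟨rfl, by omega⟩
        · simp [dl] at hdl; omega
        · simp [dl] at hdl; omega
      obtain ⟨rfl, rfl⟩ := hs
      exact ⟨[], t, by simp, by simp, by simp⟩
    · push_neg at hlev
      have h1' : (d + dl s) + dsum t = 1 := by
        simp only [dsum_cons] at h1; omega
      obtain ⟨a, b, heq, ha, hds⟩ := ih (d + dl s) (by omega) hok.2 hp.2 h1'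
      refine ⟨s :: a, b, by rw [heq]; simp, ?_, ?_⟩
      · refine pos_cons.mpr ⟨by omega, ?_⟩
        have : d + dl s - 1 = d - 1 + dl s := by ring
        rw [← this]
        exact ha
      · simp only [dsum_cons]; omega

lemma uniqB {d : ℤ} {a₁ b₁ a₂ b₂ : List St}
    (he : a₁ ++ ((1:ℤ),(0:ℤ)) :: b₁ = a₂ ++ ((1:ℤ),(0:ℤ)) :: b₂)
    (h₁ : d + dsum a₁ = 2) (h₂ : d + dsum a₂ = 2)
    (p₁ : pos (d-1) a₁) (p₂ : pos (d-1) a₂) : a₁ = a₂ ∧ b₁ = b₂ := by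
  suffices h : a₁ = a₂ by
    subst h
    exact ⟨rfl, List.cons_injective (List.append_cancel_left he)⟩
  have key : ∀ (x₁ y₁ x₂ y₂ : List St), d + dsum x₁ = 2 → d + dsum x₂ = 2 →
      pos (d-1) x₂ →
      (∃ r, x₂ = x₁ ++ r ∧ ((1:ℤ),(0:ℤ)) :: y₁ = r ++ ((1:ℤ),(0:ℤ)) :: y₂) → x₁ = x₂ := by
    intro x₁ y₁ x₂ y₂ hx₁ hx₂ px₂ ⟨r, hr1, hr2⟩
    cases r with
    | nil => simpa using hr1.symm
    | cons u r' =>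
      exfalso
      rw [List.cons_append] at hr2
      obtain ⟨rfl, hy⟩ := List.cons_eq_cons.mp hr2
      subst hr1
      have := pos_append.mp px₂
      have h2 := this.2
      have hR : (1:ℤ) ≤ (d - 1 + dsum x₁) + dl ((1:ℤ),(0:ℤ)) := (pos_cons.mp h2).1
      simp [dl] at hR
      omega
  rcases List.append_eq_append_iff.mp he with ⟨r, hr1, hr2⟩ | ⟨r, hr1, hr2⟩
  · exact key a₁ b₁ a₂ b₂ h₁ h₂ p₂ ⟨r, hr1, hr2⟩
  · exact (key a₂ b₂ a₁ b₁ h₂ h₁ p₁ ⟨r, hr1, hr2⟩).symm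


def glueU (p : List St × List St) : List St := p.1 ++ ((0:ℤ),(1:ℤ)) :: p.2
def glueR (p : List St × List St) : List St := p.1 ++ ((1:ℤ),(0:ℤ)) :: p.2

lemma splitA_sets (m : ℕ) :
    T 0 (m:ℤ) ((m:ℤ)+1) = ⋃ i ∈ Finset.range (m+1),
      glueU '' ((T 0 (i:ℤ) (i:ℤ)) ×ˢ (P ((m:ℤ)-(i:ℤ)) ((m:ℤ)-(i:ℤ)))) := by
  ext l
  constructor
  · rintro ⟨hok, hend⟩
    have hds : dsum l = 1 := by rw [dsum_eq, hend]; ring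
    obtain ⟨a, b, rfl, ha, hb⟩ := existA l 0 hok (by omega) (Or.inl le_rfl)
    have hdsa : dsum a = 0 := by omega
    have hoka : ok 0 a := (ok_append.mp hok).1
    have hokr := (ok_append.mp hok).2
    have hokb : ok 1 b := by
      have := hokr.2
      rw [hdsa] at this
      norm_num [dl] at this
      exact this
    rw [endPt_append, endPt_cons, Prod.mk.injEq] at hend
    have hae : (endPt a).2 = (endPt a).1 := by
      have := dsum_eq a; omega
    have ha1 : 0 ≤ (endPt a).1 := (endPt_nonneg hoka).1
    have hb1 : 0 ≤ (endPt b).1 := (endPt_nonneg hokb).1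
    have hbe : (endPt b).2 = (endPt b).1 := by
      have := dsum_eq b; have := hb; omega
    refine Set.mem_iUnion₂.mpr ⟨(endPt a).1.toNat, ?_, (a, b), ⟨⟨hoka, ?_⟩, hokb, hb, ?_⟩, rfl⟩
    · rw [Finset.mem_range]
      omega
    · rw [Prod.ext_iff]
      constructor <;> simp <;> omega
    · rw [Prod.ext_iff]
      constructor <;> simp <;> omega
  · intro hl
    obtain ⟨i, hi, ⟨p, q⟩, ⟨⟨hokp, hendp⟩, hokq, hpq, hendq⟩, rfl⟩ := Set.mem_iUnion₂.mp hl
    have hdsp : dsum p = 0 := by rw [dsum_eq, hendp]; ring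
    simp only [glueU]
    constructor
    · apply ok_append.mpr
      refine ⟨hokp, ?_⟩
      rw [hdsp]
      refine ⟨Or.inr (Or.inl rfl), ?_⟩
      norm_num [dl]
      exact hokq
    · rw [endPt_append, endPt_cons, hendp, hendq]
      rw [Prod.ext_iff]
      constructor <;> simp <;> ring
  
lemma splitB_sets (k : ℕ) :
    P2 ((k:ℤ)+1) (k:ℤ) = ⋃ i ∈ Finset.range (k+1),
      glueR '' ((P (i:ℤ) (i:ℤ)) ×ˢ (P ((k:ℤ)-(i:ℤ)) ((k:ℤ)-(i:ℤ)))) := by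
  ext l
  constructor
  · rintro ⟨hok, hp, hend⟩
    have hds : dsum l = -1 := by rw [dsum_eq, hend]; ring
    obtain ⟨a, b, rfl, hpa, ha⟩ := existB l 2 le_rfl hok hp (by omega)
    have hdsa : dsum a = 0 := by omega
    have hoka : ok 2 a := (ok_append.mp hok).1
    have hokr := (ok_append.mp hok).2
    have hokb : ok 1 b := by
      have := hokr.2
      rw [hdsa] at this
      norm_num [dl] at this
      exact this
    have hpb : pos 1 b := by
      have := (pos_append.mp hp).2
      rw [hdsa] at this
      have := (pos_cons.mp this).2
      norm_num [dl] at this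
      exact this
    have hpa1 : pos 1 a := by simpa using hpa
    rw [endPt_append, endPt_cons, Prod.mk.injEq] at hend
    have hae : (endPt a).2 = (endPt a).1 := by
      have := dsum_eq a; omega
    have ha1 : 0 ≤ (endPt a).1 := (endPt_nonneg hoka).1
    have hb1 : 0 ≤ (endPt b).1 := (endPt_nonneg hokb).1
    have hbe : (endPt b).2 = (endPt b).1 := by
      have := dsum_eq b; omega
    refine Set.mem_iUnion₂.mpr ⟨(endPt a).1.toNat, ?_, (a, b), ⟨?_, hokb, hpb, ?_⟩, rfl⟩
    · rw [Finset.mem_range]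
      omega
    · rw [← E_eq_P]
      refine ⟨hoka, hpa1, ?_⟩
      rw [Prod.ext_iff]
      constructor <;> simp <;> omega
    · rw [Prod.ext_iff]
      constructor <;> simp <;> omega
  · intro hl
    obtain ⟨i, hi, ⟨p, q⟩, ⟨hpmem, hokq, hpq, hendq⟩, rfl⟩ := Set.mem_iUnion₂.mp hl
    rw [← E_eq_P] at hpmem
    obtain ⟨hokp, hposp, hendp⟩ := hpmem
    have hdsp : dsum p = 0 := by rw [dsum_eq, hendp]; ring
    simp only [glueR]
    refine ⟨?_, ?_, ?_⟩
    · apply ok_append.mpr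
      refine ⟨hokp, ?_⟩
      rw [hdsp]
      refine ⟨Or.inl rfl, ?_⟩
      norm_num [dl]
      exact hokq
    · apply pos_append.mpr
      refine ⟨pos_mono one_le_two hposp, ?_⟩
      rw [hdsp]
      refine pos_cons.mpr ⟨by norm_num [dl], ?_⟩
      norm_num [dl]
      exact hpq
    · rw [endPt_append, endPt_cons, hendp, hendq]
      rw [Prod.ext_iff]
      constructor <;> simp <;> ring


lemma card_splitA (m : ℕ) :
    Nat.card ↥(T 0 (m:ℤ) ((m:ℤ)+1)) =
      ∑ i ∈ Finset.range (m+1),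
        Nat.card ↥(T 0 (i:ℤ) (i:ℤ)) * Nat.card ↥(P ((m:ℤ)-(i:ℤ)) ((m:ℤ)-(i:ℤ))) := by
  rw [Nat.card_coe_set_eq, splitA_sets]
  rw [ncard_biUnion_range (m+1) ?hfin ?hdisj]
  case hfin =>
    intro i
    exact (((finite_T 0 (i:ℤ) (i:ℤ)).prod (finite_P _ _)).image _)
  case hdisj =>
    intro i j hij
    rw [Set.disjoint_left]
    rintro l ⟨⟨p, q⟩, ⟨⟨_, hendp⟩, _, hpq, _⟩, rfl⟩ ⟨⟨p', q'⟩, ⟨⟨_, hendp'⟩, _, hpq', _⟩, he⟩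
    simp only [glueU] at he
    dsimp only at hendp hendp' hpq hpq'
    have := uniqA (d := 0) he
      (by rw [dsum_eq, hendp']; ring) (by rw [dsum_eq, hendp]; ring) hpq' hpq
    apply hij
    have h2 : endPt p' = endPt p := by rw [this.1]
    rw [hendp, hendp'] at h2
    have h3 := (Prod.ext_iff.mp h2).1
    dsimp at h3
    exact_mod_cast h3.symm
  · apply Finset.sum_congr rfl
    intro i _
    rw [Set.ncard_image_of_injOn, ← Nat.card_coe_set_eq, card_prod_sets,
      Nat.card_coe_set_eq, Nat.card_coe_set_eq]
    rintro ⟨p, q⟩ ⟨⟨_, hendp⟩, _, hpq, _⟩ ⟨p', q'⟩ ⟨⟨_, hendp'⟩, _, hpq', _⟩ he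
    simp only [glueU] at he
    dsimp only at hendp hendp' hpq hpq'
    have := uniqA (d := 0) he
      (by rw [dsum_eq, hendp]; ring) (by rw [dsum_eq, hendp']; ring) hpq hpq'
    simp [Prod.ext_iff, this.1, this.2]

lemma card_splitB (k : ℕ) :
    Nat.card ↥(P2 ((k:ℤ)+1) (k:ℤ)) =
      ∑ i ∈ Finset.range (k+1),
        Nat.card ↥(P (i:ℤ) (i:ℤ)) * Nat.card ↥(P ((k:ℤ)-(i:ℤ)) ((k:ℤ)-(i:ℤ))) := by
  rw [Nat.card_coe_set_eq, splitB_sets]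
  rw [ncard_biUnion_range (k+1) ?hfin ?hdisj]
  case hfin =>
    intro i
    exact (((finite_P (i:ℤ) (i:ℤ)).prod (finite_P _ _)).image _)
  case hdisj =>
    intro i j hij
    rw [Set.disjoint_left]
    rintro l ⟨⟨p, q⟩, ⟨hpmem, _⟩, rfl⟩ ⟨⟨p', q'⟩, ⟨hpmem', _⟩, he⟩
    rw [← E_eq_P] at hpmem hpmem'
    obtain ⟨_, hposp, hendp⟩ := hpmem
    obtain ⟨_, hposp', hendp'⟩ := hpmem'
    simp only [glueR] at he
    dsimp only at hendp hendp' hposp hposp'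
    have := uniqB (d := 2) he
      (by rw [dsum_eq, hendp']; ring) (by rw [dsum_eq, hendp]; ring)
      (by norm_num; exact hposp') (by norm_num; exact hposp)
    apply hij
    have h2 : endPt p' = endPt p := by rw [this.1]
    rw [hendp, hendp'] at h2
    have h3 := (Prod.ext_iff.mp h2).1
    dsimp at h3
    exact_mod_cast h3.symm
  · apply Finset.sum_congr rfl
    intro i _
    rw [Set.ncard_image_of_injOn, ← Nat.card_coe_set_eq, card_prod_sets,
      Nat.card_coe_set_eq, Nat.card_coe_set_eq]
    rintro ⟨p, q⟩ ⟨hpmem, _⟩ ⟨p', q'⟩ ⟨hpmem', _⟩ he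
    rw [← E_eq_P] at hpmem hpmem'
    obtain ⟨_, hposp, hendp⟩ := hpmem
    obtain ⟨_, hposp', hendp'⟩ := hpmem'
    simp only [glueR] at he
    dsimp only at hendp hendp' hposp hposp'
    have := uniqB (d := 2) he
      (by rw [dsum_eq, hendp]; ring) (by rw [dsum_eq, hendp']; ring)
      (by norm_num; exact hposp) (by norm_num; exact hposp')
    simp [Prod.ext_iff, this.1, this.2]


/-! ### Identification with Schröder numbers -/

noncomputable def sN (j : ℕ) : ℕ := Nat.card ↥(P (j:ℤ) (j:ℤ))

lemma sN_zero : sN 0 = 1 := by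
  rw [sN]
  norm_num
  rw [P_zero]
  exact ⟨[], rfl⟩

lemma card_P2_eq (k : ℕ) :
    Nat.card ↥(P2 ((k:ℤ)+1) (k:ℤ)) = ∑ i ∈ Finset.range (k+1), sN i * sN (k-i) := by
  rw [card_splitB]
  apply Finset.sum_congr rfl
  intro i hi
  rw [Finset.mem_range] at hi
  have h : ((k:ℤ) - (i:ℤ)) = ((k - i : ℕ) : ℤ) := by omega
  rw [h]
  rfl

lemma sN_succ (n : ℕ) :
    sN (n+1) = sN n + ∑ i ∈ Finset.range (n+1), sN i * sN (n-i) := by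
  have h0 : ¬(((n:ℤ)+1) = 0 ∧ ((n:ℤ)+1) = 0) := by
    rintro ⟨h, -⟩
    omega
  have hrec := card_P_head ((n:ℤ)+1) ((n:ℤ)+1) h0
  have hc : ((n+1 : ℕ) : ℤ) = (n:ℤ)+1 := by push_cast; ring
  have hc2 : ((n:ℤ)+1-1) = (n:ℤ) := by ring
  rw [hc2] at hrec
  rw [sN, hc, hrec, card_P2_eq n, add_comm]
  rfl

lemma sN_eq_schroeder : ∀ j, sN j = schroeder j := by
  intro j
  induction j using Nat.strong_induction_on with
  | _ j ih =>
    match j with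
    | 0 => rw [sN_zero, schroeder]
    | (n+1) =>
      rw [sN_succ, schroeder,
        Fin.sum_univ_eq_sum_range (fun i => schroeder i * schroeder (n-i)) (n+1)]
      rw [ih n (by omega)]
      congr 1
      apply Finset.sum_congr rfl
      intro i hi
      rw [Finset.mem_range] at hi
      rw [ih i (by omega), ih (n-i) (by omega)]

/-! ### Relating `LCSstar` to `T` -/

lemma okFrom_iff : ∀ (l : List St) (p : ℤ × ℤ),
    okFrom (fun q => q.1 < q.2) p l ↔ ok (p.2 - p.1) l := by
  intro l
  induction l with
  | nil => intro p; constructor <;> intro <;> trivial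
  | cons s t ih =>
    intro p
    show ((s = (1,0) ∨ s = (0,1) ∨ (s = (1,1) ∧ p.1 < p.2)) ∧
        okFrom _ (p.1 + s.1, p.2 + s.2) t) ↔ _
    rw [ok_cons]
    apply and_congr
    · apply or_congr Iff.rfl
      apply or_congr Iff.rfl
      apply and_congr Iff.rfl
      omega
    · rw [ih (p.1 + s.1, p.2 + s.2)]
      have : (p.1 + s.1, p.2 + s.2).2 - (p.1 + s.1, p.2 + s.2).1 = p.2 - p.1 + dl s := by
        simp [dl]; ring
      rw [this]

lemma LCSstar_eq_T (n k : ℕ) : LCSstar n k = T 0 (n:ℤ) (k:ℤ) := by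
  ext l
  constructor
  · rintro ⟨h1, h2⟩
    refine ⟨?_, h2⟩
    have := (okFrom_iff l (0,0)).mp h1
    simpa using this
  · rintro ⟨h1, h2⟩
    refine ⟨(okFrom_iff l (0,0)).mpr (by simpa using h1), h2⟩

lemma main_odd (m : ℕ) :
    Nat.card ↥(LCSstar m (m+1)) =
      ∑ i ∈ Finset.range (m+1), fCSstar i * schroeder (m-i) := by
  rw [LCSstar_eq_T]
  have hc : ((m+1 : ℕ) : ℤ) = (m:ℤ)+1 := by push_cast; ring
  rw [hc, card_splitA]
  apply Finset.sum_congr rfl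
  intro i hi
  rw [Finset.mem_range] at hi
  congr 1
  · rw [fCSstar, LCSstar_eq_T]
  · have h : ((m:ℤ) - (i:ℤ)) = ((m - i : ℕ) : ℤ) := by omega
    rw [h]
    exact sN_eq_schroeder (m-i)

/-! ### Coefficient computations -/

lemma coeffA (i : ℕ) : PowerSeries.coeff i (subSq FstarGF) =
    if 2 ∣ i then (fCSstar (i/2) : ℤ) else 0 := by
  simp [subSq, FstarGF, PowerSeries.coeff_mk]

lemma coeffB (b : ℕ) : PowerSeries.coeff b (1 + PowerSeries.X * subSq schroederGF) =
    if b = 0 then 1 else if 2 ∣ (b-1) then (schroeder ((b-1)/2) : ℤ) else 0 := by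
  cases b with
  | zero => simp [PowerSeries.coeff_zero_X_mul]
  | succ b =>
    rw [map_add, PowerSeries.coeff_one, PowerSeries.coeff_succ_X_mul]
    simp [subSq, schroederGF, PowerSeries.coeff_mk]

lemma sum_even_odd (F G : ℕ → ℤ) (m : ℕ)
    (hF : ∀ j, j ≤ m → F (2*j) = G j) (hO : ∀ j, F (2*j+1) = 0) :
    ∑ i ∈ Finset.range (2*m+2), F i = ∑ j ∈ Finset.range (m+1), G j := by
  induction m with
  | zero =>
    have h1 : F 0 = G 0 := by simpa using hF 0 le_rfl
    have h2 : F 1 = 0 := by simpa using hO 0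
    simp [Finset.sum_range_succ, h1, h2]
  | succ m ih =>
    have e1 : 2*(m+1)+2 = (2*m+2)+1+1 := by ring
    rw [e1, Finset.sum_range_succ, Finset.sum_range_succ,
      ih (fun j hj => hF j (by omega))]
    have hA : F (2*m+2) = G (m+1) := by
      have := hF (m+1) le_rfl
      rw [show 2*(m+1) = 2*m+2 by ring] at this
      exact this
    have hB : F (2*m+2+1) = 0 := by
      have := hO (m+1)
      rw [show 2*(m+1)+1 = 2*m+2+1 by ring] at this
      exact this
    rw [hA, hB, add_zero]
    exact (Finset.sum_range_succ G (m+1)).symm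

end LCSwork


/-- the number of paths from (0,0) to (⌊n/2⌋, ⌈n/2⌉) in L*_CS equals
[x^n] F*(x²)·(1 + x·S(x²)). -/
theorem LCSstar_middle_count (n : ℕ) :
    (Nat.card ↥(LCSstar (n / 2) ((n + 1) / 2)) : ℤ) =
      PowerSeries.coeff n
        (subSq FstarGF * (1 + PowerSeries.X * subSq schroederGF)) := by
  open LCSwork in
  rw [PowerSeries.coeff_mul, Finset.Nat.sum_antidiagonal_eq_sum_range_succ_mk]
  rcases Nat.even_or_odd n with he | ho
  · obtain ⟨m, rfl⟩ := he
    have h1 : (m + m) / 2 = m := by omega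
    have h2 : (m + m + 1) / 2 = m := by omega
    rw [h1, h2]
    rw [Finset.sum_eq_single (m+m)]
    · rw [coeffA, coeffB]
      have hd : 2 ∣ m + m := ⟨m, by ring⟩
      rw [Nat.sub_self, if_pos rfl, if_pos hd, h1, mul_one]
      rfl
    · intro b hb hbn
      rw [Finset.mem_range] at hb
      rw [coeffA, coeffB]
      by_cases hd : 2 ∣ b
      · have hb1 : m + m - b ≠ 0 := by omega
        have hb2 : ¬ (2 ∣ (m + m - b - 1)) := by omega
        rw [if_neg hb1, if_neg hb2, mul_zero]
      · rw [if_neg hd, zero_mul]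
    · intro h
      exact absurd (Finset.self_mem_range_succ (m+m)) h
  · obtain ⟨m, rfl⟩ := ho
    have h1 : (2*m+1)/2 = m := by omega
    have h2 : (2*m+1+1)/2 = m+1 := by omega
    rw [h1, h2, main_odd m]
    rw [show (2*m+1).succ = 2*m+2 from rfl]
    rw [sum_even_odd _ (fun j => ((fCSstar j : ℤ) * (schroeder (m-j) : ℤ))) m ?_ ?_]
    · push_cast
      rfl
    · intro j hj
      rw [coeffA, coeffB]
      have e1 : 2*j/2 = j := by omega
      have e2 : 2*m+1-2*j ≠ 0 := by omega
      have e3 : 2 ∣ (2*m+1-2*j-1) := by omega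
      have e4 : (2*m+1-2*j-1)/2 = m - j := by omega
      rw [if_pos ⟨j, rfl⟩, if_neg e2, if_pos e3, e1, e4]
    · intro j
      rw [coeffA]
      have : ¬ (2 ∣ (2*j+1)) := by omega
      rw [if_neg this, zero_mul]
end

section
/- The generating function identity S(x) = (1/(1−x))·C(x/(1−x)²) holds: for every n ≥ 0, the large Schröder number S_n equals Σ_{k=0}^{n} C_k · binom(n+k, n−k), where C_k is the k-th Catalan number. -/
open Finset PowerSeries

/-! Both sides satisfy the Schröder recurrence `S (n+1) = S n + ∑_{i+j=n} S i * S j`.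
For `T n = ∑_k C k * binom(n+k, 2k)`, Pascal's rule gives
`T (n+1) = T n + ∑_k C (k+1) * binom(n+k+1, 2k+1)`. In the convolution `∑_{i+j=n} T i * T j`
the inner binomial sums collapse by
`∑_{i+j=n} binom(i+a, 2a) * binom(j+b, 2b) = binom(n+a+b+1, 2a+2b+1)`,
the coefficient of `x^n` in `x^a / (1-x)^(2a+1) * x^b / (1-x)^(2b+1)`, and the Catalan products
then regroup into the same sum by `C (k+1) = ∑_{a+b=k} C a * C b`. -/

theorem PowerSeries.coeff_X_pow_mul_mk_one_pow {R : Type*} [CommRing R] (a d n : ℕ) :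
    coeff n (X ^ a * PowerSeries.mk 1 ^ (a + d + 1) : R⟦X⟧) = (n + d).choose (a + d) := by
  rw [coeff_X_pow_mul', mk_one_pow_eq_mk_choose_add, coeff_mk]
  split_ifs with h
  · congr 2; omega
  · rw [Nat.choose_eq_zero_of_lt (by omega), Nat.cast_zero]

theorem Nat.sum_antidiagonal_add_choose_mul_add_choose (a b d e n : ℕ) :
    ∑ p ∈ antidiagonal n, (p.1 + d).choose (a + d) * (p.2 + e).choose (b + e) =
      (n + d + e + 1).choose (a + b + d + e + 1) := by
  have hprod : (X ^ a * PowerSeries.mk 1 ^ (a + d + 1) *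
      (X ^ b * PowerSeries.mk 1 ^ (b + e + 1)) : ℤ⟦X⟧) =
        X ^ (a + b) * PowerSeries.mk 1 ^ (a + b + (d + e + 1) + 1) := by ring
  have hcoeff := congrArg (coeff n) hprod
  rw [coeff_mul] at hcoeff
  simp only [coeff_X_pow_mul_mk_one_pow] at hcoeff
  norm_cast at hcoeff
  simpa only [add_assoc] using hcoeff

theorem Finset.sum_range_sum_range_eq_sum_range_sum_antidiagonal {M : Type*}
    [AddCommMonoid M] {N : ℕ} {f : ℕ → ℕ → M} (hf : ∀ a b, N ≤ a + b → f a b = 0) :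
    ∑ a ∈ range N, ∑ b ∈ range N, f a b = ∑ k ∈ range N, ∑ p ∈ antidiagonal k, f p.1 p.2 := by
  simp_rw [Nat.sum_antidiagonal_eq_sum_range_succ f, sum_range_diag_flip]
  refine sum_congr rfl fun a _ => (sum_subset ?_ fun b _ hb => hf a b ?_).symm
  · exact range_subset_range.mpr (Nat.sub_le N a)
  · rw [mem_range] at hb; omega

/-- `(n + k).choose (2 * k)` agrees with `(n + k).choose (n - k)` for `k ≤ n` but vanishes for
`k > n`, so the range of summation can be enlarged at will. -/
def catalanBinomialSum (n : ℕ) : ℕ := ∑ k ∈ range (n + 1), catalan k * (n + k).choose (2 * k)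

theorem catalanBinomialSum_eq_sum_range {n N : ℕ} (h : n < N) :
    catalanBinomialSum n = ∑ k ∈ range N, catalan k * (n + k).choose (2 * k) := by
  refine sum_subset (range_subset_range.mpr h) fun k _ hk => ?_
  rw [mem_range] at hk
  rw [Nat.choose_eq_zero_of_lt (by omega), mul_zero]

theorem catalanBinomialSum_succ (n : ℕ) :
    catalanBinomialSum (n + 1) = catalanBinomialSum n +
      ∑ k ∈ range (n + 1), catalan (k + 1) * (n + k + 1).choose (2 * k + 1) := by
  rw [catalanBinomialSum_eq_sum_range (Nat.lt_succ_self (n + 1)),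
    catalanBinomialSum_eq_sum_range (by omega : n < n + 1 + 1), sum_range_succ',
    sum_range_succ' (fun k => catalan k * (n + k).choose (2 * k)), add_right_comm (∑ k ∈ _, _),
    ← sum_add_distrib]
  congr 1
  · refine sum_congr rfl fun k _ => ?_
    rw [show n + 1 + (k + 1) = n + k + 1 + 1 by ring, show 2 * (k + 1) = 2 * k + 1 + 1 by ring,
      Nat.choose_succ_succ, show n + (k + 1) = n + k + 1 by ring]
    ring
  · simp

theorem sum_antidiagonal_catalanBinomialSum_mul (n : ℕ) :
    ∑ p ∈ antidiagonal n, catalanBinomialSum p.1 * catalanBinomialSum p.2 =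
      ∑ k ∈ range (n + 1), catalan (k + 1) * (n + k + 1).choose (2 * k + 1) := by
  have hvanish : ∀ a b, n + 1 ≤ a + b →
      catalan a * catalan b * (n + a + b + 1).choose (2 * a + 2 * b + 1) = 0 := fun a b h => by
    rw [Nat.choose_eq_zero_of_lt (by omega), mul_zero]
  calc ∑ p ∈ antidiagonal n, catalanBinomialSum p.1 * catalanBinomialSum p.2
      = ∑ a ∈ range (n + 1), ∑ b ∈ range (n + 1), catalan a * catalan b *
          ∑ p ∈ antidiagonal n, (p.1 + a).choose (a + a) * (p.2 + b).choose (b + b) := by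
        have hexpand : ∀ p ∈ antidiagonal n,
            catalanBinomialSum p.1 * catalanBinomialSum p.2 =
              ∑ a ∈ range (n + 1), ∑ b ∈ range (n + 1), catalan a * catalan b *
                ((p.1 + a).choose (a + a) * (p.2 + b).choose (b + b)) := fun p hp => by
          rw [catalanBinomialSum_eq_sum_range (Nat.antidiagonal.fst_lt hp),
            catalanBinomialSum_eq_sum_range (Nat.antidiagonal.snd_lt hp), sum_mul_sum]
          refine sum_congr rfl fun a _ => sum_congr rfl fun b _ => ?_
          rw [two_mul, two_mul]
          ring
        rw [sum_congr rfl hexpand, sum_comm]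
        refine sum_congr rfl fun a _ => ?_
        rw [sum_comm]
        simp only [mul_sum]
    _ = ∑ a ∈ range (n + 1), ∑ b ∈ range (n + 1),
          catalan a * catalan b * (n + a + b + 1).choose (2 * a + 2 * b + 1) := by
        refine sum_congr rfl fun a _ => sum_congr rfl fun b _ => ?_
        rw [Nat.sum_antidiagonal_add_choose_mul_add_choose]
        ring_nf
    _ = ∑ k ∈ range (n + 1), ∑ p ∈ antidiagonal k,
          catalan p.1 * catalan p.2 * (n + p.1 + p.2 + 1).choose (2 * p.1 + 2 * p.2 + 1) :=
        sum_range_sum_range_eq_sum_range_sum_antidiagonal hvanish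
    _ = _ := by
        refine sum_congr rfl fun k _ => ?_
        rw [catalan_succ', sum_mul]
        refine sum_congr rfl fun p hp => ?_
        rw [← HasAntidiagonal.mem_antidiagonal.mp hp]
        ring_nf

theorem schroeder_succ (n : ℕ) :
    schroeder (n + 1) = schroeder n + ∑ p ∈ antidiagonal n, schroeder p.1 * schroeder p.2 := by
  rw [schroeder, Fin.sum_univ_eq_sum_range (fun i => schroeder i * schroeder (n - i)),
    Nat.sum_antidiagonal_eq_sum_range_succ (fun i j => schroeder i * schroeder j)]

theorem schroeder_eq_catalanBinomialSum (n : ℕ) : schroeder n = catalanBinomialSum n := by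
  induction n using Nat.strong_induction_on with
  | _ n ih =>
    cases n with
    | zero => simp [schroeder, catalanBinomialSum]
    | succ n =>
      rw [schroeder_succ, catalanBinomialSum_succ, ← sum_antidiagonal_catalanBinomialSum_mul,
        ih n n.lt_succ_self]
      congr 1
      refine sum_congr rfl fun p hp => ?_
      rw [ih p.1 (Nat.antidiagonal.fst_lt hp), ih p.2 (Nat.antidiagonal.snd_lt hp)]

/-- S_n = Σ_{k=0}^{n} C_k · binom(n+k, n−k). -/
theorem schroeder_catalan_binom (n : ℕ) :
    schroeder n = ∑ k ∈ Finset.range (n + 1), catalan k * Nat.choose (n + k) (n - k) := by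
  rw [schroeder_eq_catalanBinomialSum]
  refine sum_congr rfl fun k hk => ?_
  rw [mem_range] at hk
  rw [Nat.choose_symm_of_eq_add (by omega : n + k = n - k + 2 * k)]
end
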